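/- arXiv:1711.05508 — 2 statements merged into one kernel-verified Lean document; each statement's English description precedes it below -/
import Mathlib

section
/- Let ⟨K,B,P,N⟩_R be a DPI and D a set of minimal diagnoses w.r.t. it with |D| ≥ 2. Then for every D_i ∈ D, the partition ⟨{D_i}, D \ {D_i}, ∅⟩ is a canonical q-partition; moreover U_D \ D_i is a query w.r.t. D whose q-partition is ⟨{D_i}, D \ {D_i}, ∅⟩. -/
namespace KBDDiag

/-- A diagnosis problem instance (DPI) `⟨K,B,P,N⟩_R` over a Tarskian logic on sentences `L`. -/
structure DPI (L : Type*) where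
  /-- the entailment relation of the logic -/
  entails : Set L → L → Prop
  /-- entailment is monotonic -/
  entails_mono : ∀ (X Y : Set L) (α : L), entails X α → entails (X ∪ Y) α
  /-- entailment is idempotent -/
  entails_idem : ∀ (X A : Set L) (β : L),
    (∀ α ∈ A, entails X α) → entails (X ∪ A) β → entails X β
  /-- entailment is extensive -/
  entails_ext : ∀ (X : Set L) (α : L), α ∈ X → entails X α
  /-- the (possibly faulty) KB -/
  K : Set L
  /-- the background KB -/
  B : Set L
  /-- the positive test cases -/
  P : Set (Set L)
  /-- the negative test cases -/
  N : Set (Set L)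
  /-- requirements: `r X` means the KB `X` satisfies requirement `r` -/
  R : Set (Set L → Prop)
  K_finite : K.Finite
  B_finite : B.Finite
  K_B_disjoint : K ∩ B = ∅
  P_finite : P.Finite
  P_mem_finite : ∀ p ∈ P, Set.Finite p
  N_finite : N.Finite
  N_mem_finite : ∀ n ∈ N, Set.Finite n
  /-- violation of a requirement is monotone -/
  viol_mono : ∀ r ∈ R, ∀ X Y : Set L, X ⊆ Y → ¬ r X → ¬ r Y
  /-- requirements are preserved under adding entailed sentences -/
  sat_entailed : ∀ r ∈ R, ∀ X A : Set L, r X → (∀ α ∈ A, entails X α) → r (X ∪ A)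
  /-- the background KB satisfies every requirement -/
  B_sat : ∀ r ∈ R, r B

namespace DPI

variable {L : Type*} (d : DPI L)

/-- `X ⊨ Y` : X entails every sentence of Y. -/
def EntailsAll (X Y : Set L) : Prop := ∀ α ∈ Y, d.entails X α

/-- `U_P`, the union of all positive test cases. -/
def UP : Set L := ⋃₀ d.P

/-- `Ks` is a solution KB w.r.t. the DPI. -/
def IsSolutionKB (Ks : Set L) : Prop :=
  (∀ r ∈ d.R, r (Ks ∪ d.B)) ∧
  (∀ p ∈ d.P, d.EntailsAll (Ks ∪ d.B) p) ∧
  (∀ n ∈ d.N, ¬ d.EntailsAll (Ks ∪ d.B) n)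

/-- `D` is a diagnosis w.r.t. the DPI. -/
def IsDiagnosis (D : Set L) : Prop :=
  D ⊆ d.K ∧ d.IsSolutionKB ((d.K \ D) ∪ d.UP)

/-- `D` is a minimal diagnosis w.r.t. the DPI. -/
def IsMinDiagnosis (D : Set L) : Prop :=
  d.IsDiagnosis D ∧ ∀ D' ⊂ D, ¬ d.IsDiagnosis D'

/-- `C` is a conflict w.r.t. the DPI. -/
def IsConflict (C : Set L) : Prop :=
  C ⊆ d.K ∧ ¬ d.IsSolutionKB (C ∪ d.UP)

/-- `C` is a minimal conflict w.r.t. the DPI. -/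
def IsMinConflict (C : Set L) : Prop :=
  d.IsConflict C ∧ ∀ C' ⊂ C, ¬ d.IsConflict C'

/-- `Ks` is a maximal solution KB w.r.t. the DPI. -/
def IsMaxSolutionKB (Ks : Set L) : Prop :=
  d.IsSolutionKB Ks ∧ ¬ ∃ K' : Set L, d.IsSolutionKB K' ∧ Ks ∩ d.K ⊂ K' ∩ d.K

/-- `K*_i = (K \ D_i) ∪ B ∪ U_P`. -/
def Kstar (Di : Set L) : Set L := (d.K \ Di) ∪ d.B ∪ d.UP

/-- `X` violates some requirement in `R` or entails some negative test case. -/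
def Violates (X : Set L) : Prop :=
  (∃ r ∈ d.R, ¬ r X) ∨ (∃ n ∈ d.N, d.EntailsAll X n)

/-- `dx(X)` w.r.t. the leading diagnoses `Ds`. -/
def dxS (Ds : Set (Set L)) (X : Set L) : Set (Set L) :=
  {Di ∈ Ds | d.EntailsAll (d.Kstar Di) X}

/-- `dnx(X)` w.r.t. the leading diagnoses `Ds`. -/
def dnxS (Ds : Set (Set L)) (X : Set L) : Set (Set L) :=
  {Di ∈ Ds | d.Violates (d.Kstar Di ∪ X)}

/-- `dz(X)` w.r.t. the leading diagnoses `Ds`. -/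
def dzS (Ds : Set (Set L)) (X : Set L) : Set (Set L) :=
  Ds \ (d.dxS Ds X ∪ d.dnxS Ds X)

/-- `Q` is a query w.r.t. the leading diagnoses `Ds`. -/
def IsQuery (Ds : Set (Set L)) (Q : Set L) : Prop :=
  Q.Nonempty ∧ (d.dxS Ds Q).Nonempty ∧ (d.dnxS Ds Q).Nonempty

/-- The canonical query `Q_can(S) = (K \ U_S) ∩ (U_D \ I_D)` w.r.t. the seed `S`. -/
def Qcan (Ds S : Set (Set L)) : Set L := (d.K \ ⋃₀ S) ∩ (⋃₀ Ds \ ⋂₀ Ds)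

/-- `⟨dxp, dnxp, ∅⟩` is a canonical q-partition of `Ds`. -/
def IsCanonicalQPartition (Ds dxp dnxp : Set (Set L)) : Prop :=
  dxp ∪ dnxp = Ds ∧ dxp ∩ dnxp = ∅ ∧
  dxp.Nonempty ∧ dxp ⊂ Ds ∧
  (d.Qcan Ds dxp).Nonempty ∧
  d.dxS Ds (d.Qcan Ds dxp) = dxp ∧
  d.dnxS Ds (d.Qcan Ds dxp) = dnxp ∧
  d.dzS Ds (d.Qcan Ds dxp) = ∅

end DPI

/-- `Disc_D = U_D \ I_D`, the discrimination sentences w.r.t. `Ds`. -/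
def Disc {L : Type*} (Ds : Set (Set L)) : Set L := ⋃₀ Ds \ ⋂₀ Ds

/-- `H` is a hitting set of the collection `S`. -/
def IsHittingSet {α : Type*} (S : Set (Set α)) (H : Set α) : Prop :=
  H ⊆ ⋃₀ S ∧ ∀ s ∈ S, (H ∩ s).Nonempty

/-- `H` is a minimal hitting set of the collection `S`. -/
def IsMinHittingSet {α : Type*} (S : Set (Set α)) (H : Set α) : Prop :=
  IsHittingSet S H ∧ ∀ H' ⊂ H, ¬ IsHittingSet S H'

/-- `MHS S`, the set of all minimal hitting sets of `S`. -/
def MHS {α : Type*} (S : Set (Set α)) : Set (Set α) :=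
  {H | IsMinHittingSet S H}


/-! A leading diagnosis `Dⱼ ≠ Dᵢ` is not contained in the minimal diagnosis `Dᵢ`, so the query
`Q = U_D \ Dᵢ` hits it; removing `Dⱼ ∩ Q` from `Dⱼ` gives a proper subset of `Dⱼ`, which is no
diagnosis, and the faulty KB it leaves is contained in `K*ⱼ ∪ Q`. Hence `K*ⱼ ∪ Q` violates, while
`K*ᵢ ⊇ Q` entails `Q`. Finally, since every leading diagnosis lies in `K`, `Q_can({Dᵢ})` is `Q`. -/

namespace DPI

variable {L : Type*} (d : DPI L)

theorem entails_of_subset {X Y : Set L} {α : L} (h : d.entails X α) (hXY : X ⊆ Y) :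
    d.entails Y α := by
  simpa [Set.union_eq_self_of_subset_left hXY] using d.entails_mono X Y α h

theorem entailsAll_of_subset {X Y : Set L} (hYX : Y ⊆ X) : d.EntailsAll X Y :=
  fun α hα => d.entails_ext X α (hYX hα)

variable {d}

theorem Violates.mono {X Y : Set L} (h : d.Violates X) (hXY : X ⊆ Y) : d.Violates Y := by
  rcases h with ⟨r, hr, hv⟩ | ⟨n, hn, he⟩
  · exact Or.inl ⟨r, hr, d.viol_mono r hr X Y hXY hv⟩
  · exact Or.inr ⟨n, hn, fun α hα => d.entails_of_subset (he α hα) hXY⟩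

variable (d)

theorem union_B_eq_Kstar (D : Set L) : (d.K \ D ∪ d.UP) ∪ d.B = d.Kstar D := by
  simp only [Kstar]
  ac_rfl

theorem entailsAll_Kstar_of_subset {D Q : Set L} (hQ : Q ⊆ d.K \ D) :
    d.EntailsAll (d.Kstar D) Q :=
  d.entailsAll_of_subset (hQ.trans (Set.subset_union_left.trans Set.subset_union_left))

theorem violates_Kstar_of_not_isDiagnosis {D : Set L} (hDK : D ⊆ d.K)
    (hD : ¬ d.IsDiagnosis D) : d.Violates (d.Kstar D) := by
  by_contra hv
  simp only [Violates, not_or, not_exists, not_and, not_not] at hv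
  refine hD ⟨hDK, fun r hr => ?_, fun p hp => ?_, fun n hn => ?_⟩
  · exact d.union_B_eq_Kstar D ▸ hv.1 r hr
  · exact d.entailsAll_of_subset fun α hα => Or.inl (Or.inr ⟨p, hp, hα⟩)
  · exact d.union_B_eq_Kstar D ▸ hv.2 n hn

variable {d}

theorem IsDiagnosis.not_violates_Kstar_union {D Q : Set L} (hD : d.IsDiagnosis D)
    (hQ : d.EntailsAll (d.Kstar D) Q) : ¬ d.Violates (d.Kstar D ∪ Q) := by
  rw [← d.union_B_eq_Kstar] at hQ ⊢
  rintro (⟨r, hr, hv⟩ | ⟨n, hn, he⟩)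
  · exact hv (d.sat_entailed r hr _ Q (hD.2.1 r hr) hQ)
  · exact hD.2.2.2 n hn fun α hα => d.entails_idem _ Q α hQ (he α hα)

theorem IsMinDiagnosis.eq_of_subset {D D' : Set L} (hD : d.IsMinDiagnosis D)
    (hD' : d.IsDiagnosis D') (hsub : D' ⊆ D) : D' = D :=
  by_contra fun hne => hD.2 D' (hsub.ssubset_of_ne hne) hD'

theorem IsMinDiagnosis.violates_Kstar_union {D Q : Set L} (hD : d.IsMinDiagnosis D)
    (hQ : (D ∩ Q).Nonempty) : d.Violates (d.Kstar D ∪ Q) := by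
  have hviol := d.violates_Kstar_of_not_isDiagnosis (Set.sdiff_subset.trans hD.1.1)
    (hD.2 _ (Set.sdiff_ssubset_left_iff.2 hQ))
  refine hviol.mono ?_
  intro x hx
  simp only [Kstar, Set.mem_union, Set.mem_sdiff] at hx ⊢
  tauto

theorem qPartition_eq_of_entailsAll_of_violates {Ds X : Set (Set L)} {Q : Set L} (hDs : ∀ D ∈ Ds, d.IsDiagnosis D)
    (hX : X ⊆ Ds) (hentails : ∀ D ∈ X, d.EntailsAll (d.Kstar D) Q)
    (hviolates : ∀ D ∈ Ds \ X, d.Violates (d.Kstar D ∪ Q)) :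
    d.dxS Ds Q = X ∧ d.dnxS Ds Q = Ds \ X ∧ d.dzS Ds Q = ∅ := by
  have hdx : d.dxS Ds Q = X := by
    ext D
    refine ⟨fun ⟨hD, hE⟩ => ?_, fun hD => ⟨hX hD, hentails D hD⟩⟩
    by_contra hDX
    exact (hDs D hD).not_violates_Kstar_union hE (hviolates D ⟨hD, hDX⟩)
  have hdnx : d.dnxS Ds Q = Ds \ X := by
    ext D
    refine ⟨fun ⟨hD, hV⟩ => ⟨hD, fun hDX => ?_⟩, fun hD => ⟨hD.1, hviolates D hD⟩⟩
    exact (hDs D hD).not_violates_Kstar_union (hentails D hDX) hV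
  refine ⟨hdx, hdnx, ?_⟩
  rw [dzS, hdx, hdnx, Set.union_sdiff_cancel hX, Set.sdiff_self]

theorem Qcan_singleton {Ds : Set (Set L)} {D : Set L} (hD : D ∈ Ds)
    (hDsK : ∀ D' ∈ Ds, D' ⊆ d.K) :
    d.Qcan Ds {D} = ⋃₀ Ds \ D := by
  ext x
  simp only [Qcan, Set.sUnion_singleton, Set.mem_inter_iff, Set.mem_sdiff, Set.mem_sUnion,
    Set.mem_sInter]
  constructor
  · rintro ⟨⟨-, hxD⟩, hxU, -⟩
    exact ⟨hxU, hxD⟩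
  · rintro ⟨⟨D', hD', hxD'⟩, hxD⟩
    exact ⟨⟨hDsK D' hD' hxD', hxD⟩, ⟨D', hD', hxD'⟩, fun h => hxD (h D hD)⟩

end DPI

/-- For `|Ds| ≥ 2` and `Di ∈ Ds`, `⟨{Di}, Ds \ {Di}, ∅⟩` is a canonical
q-partition and `U_D \ Di` is a query with exactly this q-partition. -/
theorem statement6 {L : Type*} (d : DPI L) (Ds : Set (Set L))
    (hDs : ∀ Di ∈ Ds, d.IsMinDiagnosis Di) (hcard : 2 ≤ Ds.ncard)
    (Di : Set L) (hDi : Di ∈ Ds) :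
    d.IsCanonicalQPartition Ds {Di} (Ds \ {Di}) ∧
    d.IsQuery Ds (⋃₀ Ds \ Di) ∧
    d.dxS Ds (⋃₀ Ds \ Di) = {Di} ∧
    d.dnxS Ds (⋃₀ Ds \ Di) = Ds \ {Di} ∧
    d.dzS Ds (⋃₀ Ds \ Di) = ∅ := by
  have hDsK : ∀ D ∈ Ds, D ⊆ d.K := fun D hD => (hDs D hD).1.1
  have hhits : ∀ Dj ∈ Ds \ {Di}, (Dj ∩ (⋃₀ Ds \ Di)).Nonempty := by
    rintro Dj ⟨hDj, hne⟩
    obtain ⟨x, hxj, hxi⟩ := Set.not_subset.1 fun hsub =>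
      hne ((hDs Di hDi).eq_of_subset (hDs Dj hDj).1 hsub)
    exact ⟨x, hxj, ⟨Dj, hDj, hxj⟩, hxi⟩
  have hQK : ⋃₀ Ds \ Di ⊆ d.K \ Di := Set.sdiff_subset_sdiff_left (Set.sUnion_subset hDsK)
  obtain ⟨hdx, hdnx, hdz⟩ := d.qPartition_eq_of_entailsAll_of_violates
    (fun D hD => (hDs D hD).1) (Set.singleton_subset_iff.2 hDi)
    (by rintro D rfl; exact d.entailsAll_Kstar_of_subset hQK)
    (fun Dj hDj => (hDs Dj hDj.1).violates_Kstar_union (hhits Dj hDj))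
  obtain ⟨Dj, hDj, hne⟩ := Set.exists_ne_of_one_lt_ncard (s := Ds) (by omega) Di
  have hQ : (⋃₀ Ds \ Di).Nonempty := (hhits Dj ⟨hDj, hne⟩).mono Set.inter_subset_right
  have hQcan := d.Qcan_singleton hDi hDsK
  refine ⟨⟨Set.union_sdiff_cancel (Set.singleton_subset_iff.2 hDi), Set.inter_sdiff_self _ _,
    Set.singleton_nonempty Di, ⟨Set.singleton_subset_iff.2 hDi, fun h => hne (h hDj)⟩,
    hQcan ▸ hQ, hQcan ▸ hdx, hQcan ▸ hdnx, hQcan ▸ hdz⟩,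
    ⟨hQ, hdx ▸ Set.singleton_nonempty Di, hdnx ▸ ⟨Dj, hDj, hne⟩⟩, hdx, hdnx, hdz⟩

end KBDDiag
end

section
/- Let ⟨K,B,P,N⟩_R be a DPI and D a set of minimal diagnoses w.r.t. it with |D| ≥ 2. Then the number c of canonical q-partitions w.r.t. D satisfies c = |{U_dx : ∅ ⊂ dx ⊂ D} \ {U_D}| and c ≥ |D|. -/
namespace KBDDiag

/-! For a minimal diagnosis `Dᵢ` and any `Q ⊆ K`, `K*ᵢ ⊨ Q` holds iff `Dᵢ` misses `Q`, and
`K*ᵢ ∪ Q = K*(Dᵢ \ Q)` is faulty iff `Dᵢ` meets `Q`; so every such `Q` has an empty `dz`.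
For the canonical query of a seed `dx`, a leading diagnosis misses `Q_can(dx)` iff it is covered
by `U_dx`. Hence the canonical q-partitions are exactly the `⟨dx, D \ dx, ∅⟩` for the proper
nonempty seeds `dx` that contain every leading diagnosis covered by `U_dx`. Such a seed is
recovered from its union, and the unions that arise are all `U_dx ≠ U_D`. Since minimal diagnoses
form an antichain, every singleton seed qualifies, which gives `c ≥ |D|`. -/

section CoverClosed

variable {α : Type*} {Ds dx : Set (Set α)}

def coverClosedSeeds (Ds : Set (Set α)) : Set (Set (Set α)) :=
  {dx | dx.Nonempty ∧ dx ⊂ Ds ∧ ∀ Di ∈ Ds, Di ⊆ ⋃₀ dx → Di ∈ dx}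

lemma eq_sep_subset_sUnion_of_mem_coverClosedSeeds (h : dx ∈ coverClosedSeeds Ds) :
    dx = {Di ∈ Ds | Di ⊆ ⋃₀ dx} :=
  Set.Subset.antisymm (fun _ hDi => ⟨h.2.1.1 hDi, Set.subset_sUnion_of_mem hDi⟩)
    fun Di hDi => h.2.2 Di hDi.1 hDi.2

lemma injOn_sUnion_coverClosedSeeds : Set.InjOn Set.sUnion (coverClosedSeeds Ds) := by
  intro dx hdx dx' hdx' hU
  rw [eq_sep_subset_sUnion_of_mem_coverClosedSeeds hdx,
    eq_sep_subset_sUnion_of_mem_coverClosedSeeds hdx', hU]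

lemma sUnion_image_coverClosedSeeds :
    Set.sUnion '' coverClosedSeeds Ds =
      {U | ∃ dx : Set (Set α), dx.Nonempty ∧ dx ⊂ Ds ∧ U = ⋃₀ dx} \ {⋃₀ Ds} := by
  ext U
  constructor
  · rintro ⟨dx, ⟨hne, hss, hclosed⟩, rfl⟩
    refine ⟨⟨dx, hne, hss, rfl⟩, fun hU => ?_⟩
    obtain ⟨Dj, hDj, hDjdx⟩ := Set.exists_of_ssubset hss
    exact hDjdx (hclosed Dj hDj (hU ▸ Set.subset_sUnion_of_mem hDj))
  · rintro ⟨⟨dx₀, ⟨D₀, hD₀⟩, hss₀, rfl⟩, hU⟩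
    set dx := {Di ∈ Ds | Di ⊆ ⋃₀ dx₀}
    have hdx₀ : dx₀ ⊆ dx := fun Di hDi => ⟨hss₀.1 hDi, Set.subset_sUnion_of_mem hDi⟩
    have hunion : ⋃₀ dx = ⋃₀ dx₀ :=
      Set.Subset.antisymm (Set.sUnion_subset fun Di hDi => hDi.2) (Set.sUnion_mono hdx₀)
    refine ⟨dx, ⟨⟨D₀, hdx₀ hD₀⟩, ⟨Set.sep_subset _ _, fun hDs => hU ?_⟩, ?_⟩, hunion⟩
    · exact Set.Subset.antisymm (Set.sUnion_mono hss₀.1) (hunion ▸ Set.sUnion_mono hDs)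
    · exact fun Di hDi hcov => ⟨hDi, hunion ▸ hcov⟩

lemma ncard_le_ncard_coverClosedSeeds (hanti : IsAntichain (· ⊆ ·) Ds) (hcard : 2 ≤ Ds.ncard) :
    Ds.ncard ≤ (coverClosedSeeds Ds).ncard := by
  have hfin : Ds.Finite := Set.finite_of_ncard_pos (by omega)
  have hsingleton : ∀ Di ∈ Ds, {Di} ∈ coverClosedSeeds Ds := by
    intro Di hDi
    refine ⟨Set.singleton_nonempty Di, ⟨Set.singleton_subset_iff.2 hDi, fun hDs => ?_⟩, ?_⟩
    · have := Set.ncard_le_ncard hDs (Set.finite_singleton Di)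
      rw [Set.ncard_singleton] at this
      omega
    · intro Dj hDj hcov
      rw [Set.sUnion_singleton] at hcov
      exact hanti.eq hDj hDi hcov
  calc Ds.ncard = ((fun Di => ({Di} : Set (Set α))) '' Ds).ncard :=
        (Set.ncard_image_of_injective Ds Set.singleton_injective).symm
    _ ≤ (coverClosedSeeds Ds).ncard :=
        Set.ncard_le_ncard (Set.image_subset_iff.2 hsingleton)
          (hfin.finite_subsets.subset fun dx hdx => hdx.2.1.1)

end CoverClosed

namespace DPI

variable {L : Type*} (d : DPI L)

lemma violates_of_violates_union {X A : Set L} (hA : d.EntailsAll X A)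
    (hXA : d.Violates (X ∪ A)) : d.Violates X := by
  rcases hXA with ⟨r, hr, hnr⟩ | ⟨n, hn, hent⟩
  · exact Or.inl ⟨r, hr, fun hrX => hnr (d.sat_entailed r hr X A hrX hA)⟩
  · exact Or.inr ⟨n, hn, fun β hβ => d.entails_idem X A β hA (hent β hβ)⟩

lemma Kstar_union_of_subset (Di : Set L) {Q : Set L} (hQ : Q ⊆ d.K) :
    d.Kstar Di ∪ Q = d.Kstar (Di \ Q) := by
  ext x
  simp only [Kstar, Set.mem_union, Set.mem_sdiff]
  have := @hQ x
  tauto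

lemma isDiagnosis_iff {D : Set L} : d.IsDiagnosis D ↔ D ⊆ d.K ∧ ¬ d.Violates (d.Kstar D) := by
  have hKstar : (d.K \ D) ∪ d.UP ∪ d.B = d.Kstar D := by
    simp only [Kstar, Set.union_right_comm]
  simp only [IsDiagnosis, IsSolutionKB, Violates, hKstar, not_or, not_exists, not_and, not_not]
  refine and_congr_right fun _ => ⟨fun ⟨hR, _, hN⟩ => ⟨hR, hN⟩, fun ⟨hR, hN⟩ => ⟨hR, ?_, hN⟩⟩
  -- positive test cases hold trivially, since `U_P ⊆ K*`
  exact fun p hp α hα => d.entails_ext _ α (Or.inr ⟨p, hp, hα⟩)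

variable {d}

lemma IsMinDiagnosis.violates_Kstar_diff_iff {Di : Set L} (hDi : d.IsMinDiagnosis Di)
    (Q : Set L) : d.Violates (d.Kstar (Di \ Q)) ↔ ¬ Disjoint Di Q := by
  have hsub : Di \ Q ⊆ d.K := Set.sdiff_subset.trans hDi.1.1
  by_cases hdisj : Disjoint Di Q
  · rw [hdisj.sdiff_eq_left]
    exact iff_of_false ((d.isDiagnosis_iff.1 hDi.1).2) (not_not.2 hdisj)
  · have hssub : Di \ Q ⊂ Di :=
      Set.sdiff_ssubset_left_iff.2 (Set.not_disjoint_iff_nonempty_inter.1 hdisj)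
    have := hDi.2 _ hssub
    rw [isDiagnosis_iff, not_and, not_not] at this
    exact iff_of_true (this hsub) hdisj

lemma IsMinDiagnosis.violates_union_iff {Di Q : Set L} (hDi : d.IsMinDiagnosis Di)
    (hQ : Q ⊆ d.K) : d.Violates (d.Kstar Di ∪ Q) ↔ ¬ Disjoint Di Q := by
  rw [d.Kstar_union_of_subset Di hQ, hDi.violates_Kstar_diff_iff]

lemma IsMinDiagnosis.entailsAll_iff {Di Q : Set L} (hDi : d.IsMinDiagnosis Di)
    (hQ : Q ⊆ d.K) : d.EntailsAll (d.Kstar Di) Q ↔ Disjoint Di Q := by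
  constructor
  · intro hent
    by_contra hmeet
    exact (d.isDiagnosis_iff.1 hDi.1).2
      (d.violates_of_violates_union hent ((hDi.violates_union_iff hQ).2 hmeet))
  · intro hdisj α hα
    exact d.entails_ext _ α (Or.inl (Or.inl ⟨hQ hα, Set.disjoint_right.1 hdisj hα⟩))

variable {Ds : Set (Set L)}

lemma dxS_eq (hDs : ∀ Di ∈ Ds, d.IsMinDiagnosis Di) {Q : Set L} (hQ : Q ⊆ d.K) :
    d.dxS Ds Q = {Di ∈ Ds | Disjoint Di Q} :=
  Set.sep_ext_iff.2 fun Di hDi => (hDs Di hDi).entailsAll_iff hQ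

lemma dnxS_eq (hDs : ∀ Di ∈ Ds, d.IsMinDiagnosis Di) {Q : Set L} (hQ : Q ⊆ d.K) :
    d.dnxS Ds Q = {Di ∈ Ds | ¬ Disjoint Di Q} :=
  Set.sep_ext_iff.2 fun Di hDi => (hDs Di hDi).violates_union_iff hQ

lemma dzS_eq_empty (hDs : ∀ Di ∈ Ds, d.IsMinDiagnosis Di) {Q : Set L} (hQ : Q ⊆ d.K) :
    d.dzS Ds Q = ∅ := by
  rw [dzS, dxS_eq hDs hQ, dnxS_eq hDs hQ, ← Set.sep_or, Set.sdiff_eq_empty]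
  exact fun Di hDi => ⟨hDi, em _⟩

lemma disjoint_Qcan_iff (hDs : ∀ Di ∈ Ds, d.IsMinDiagnosis Di) {dx : Set (Set L)}
    (hne : dx.Nonempty) (hsub : dx ⊆ Ds) {Di : Set L} (hDi : Di ∈ Ds) :
    Disjoint Di (d.Qcan Ds dx) ↔ Di ⊆ ⋃₀ dx := by
  obtain ⟨D₀, hD₀⟩ := hne
  constructor
  · intro hdisj α hα
    by_contra hnot
    refine Set.disjoint_left.1 hdisj hα ⟨⟨(hDs Di hDi).1.1 hα, hnot⟩, ⟨Di, hDi, hα⟩, ?_⟩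
    exact fun hI => hnot ⟨D₀, hD₀, hI D₀ (hsub hD₀)⟩
  · exact fun hcov => Set.disjoint_left.2 fun α hα hQ => hQ.1.2 (hcov hα)

lemma isCanonicalQPartition_iff (hDs : ∀ Di ∈ Ds, d.IsMinDiagnosis Di)
    {dx dnx : Set (Set L)} :
    d.IsCanonicalQPartition Ds dx dnx ↔ dx ∈ coverClosedSeeds Ds ∧ dnx = Ds \ dx := by
  have hQK : d.Qcan Ds dx ⊆ d.K := fun _ h => h.1.1
  constructor
  · rintro ⟨hunion, hinter, hne, hss, -, hdx, -, -⟩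
    refine ⟨⟨hne, hss, fun Di hDi hcov => ?_⟩, ?_⟩
    · rw [← hdx, dxS_eq hDs hQK]
      exact ⟨hDi, (disjoint_Qcan_iff hDs hne hss.1 hDi).2 hcov⟩
    · rw [← hunion, Set.union_sdiff_left, eq_comm, sdiff_eq_left]
      exact Set.disjoint_iff_inter_eq_empty.2 (Set.inter_comm _ _ ▸ hinter)
  · rintro ⟨⟨hne, hss, hclosed⟩, rfl⟩
    have hmiss : ∀ Di ∈ Ds, Disjoint Di (d.Qcan Ds dx) ↔ Di ∈ dx := fun Di hDi =>
      (disjoint_Qcan_iff hDs hne hss.1 hDi).trans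
        ⟨hclosed Di hDi, Set.subset_sUnion_of_mem⟩
    obtain ⟨Dj, hDj, hDjdx⟩ := Set.exists_of_ssubset hss
    refine ⟨Set.union_sdiff_cancel hss.1, Set.inter_sdiff_self _ _, hne, hss, ?_, ?_, ?_,
      dzS_eq_empty hDs hQK⟩
    · exact Set.not_disjoint_iff.1 (mt ((hmiss Dj hDj).1) hDjdx) |>.imp fun _ h => h.2
    · rw [dxS_eq hDs hQK]
      exact Set.Subset.antisymm (fun Di hDi => (hmiss Di hDi.1).1 hDi.2)
        fun Di hDi => ⟨hss.1 hDi, (hmiss Di (hss.1 hDi)).2 hDi⟩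
    · rw [dnxS_eq hDs hQK]
      exact Set.sep_ext_iff.2 fun Di hDi => (hmiss Di hDi).not

lemma canonicalQPartitions_eq_image (hDs : ∀ Di ∈ Ds, d.IsMinDiagnosis Di) :
    {p : Set (Set L) × Set (Set L) | d.IsCanonicalQPartition Ds p.1 p.2} =
      (fun dx => (dx, Ds \ dx)) '' coverClosedSeeds Ds := by
  ext ⟨dx, dnx⟩
  simp only [Set.mem_ofPred_eq, isCanonicalQPartition_iff hDs, Set.mem_image, Prod.mk.injEq]
  constructor
  · exact fun ⟨hdx, hdnx⟩ => ⟨dx, hdx, rfl, hdnx.symm⟩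
  · rintro ⟨dx', hdx', rfl, rfl⟩
    exact ⟨hdx', rfl⟩

lemma isAntichain_of_isMinDiagnosis (hDs : ∀ Di ∈ Ds, d.IsMinDiagnosis Di) :
    IsAntichain (· ⊆ ·) Ds :=
  fun _ hDi _ hDj hne hsub => (hDs _ hDj).2 _ (hsub.ssubset_of_ne hne) (hDs _ hDi).1

end DPI

/-- The number `c` of canonical q-partitions w.r.t. `Ds` (with `|Ds| ≥ 2`)
satisfies `c = |{U_dx : ∅ ⊂ dx ⊂ Ds} \ {U_Ds}|` and `c ≥ |Ds|`. -/
theorem statement15 {L : Type*} (d : DPI L) (Ds : Set (Set L))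
    (hDs : ∀ Di ∈ Ds, d.IsMinDiagnosis Di) (hcard : 2 ≤ Ds.ncard) :
    {p : Set (Set L) × Set (Set L) | d.IsCanonicalQPartition Ds p.1 p.2}.ncard
        = ({U : Set L | ∃ dxp : Set (Set L), dxp.Nonempty ∧ dxp ⊂ Ds ∧ U = ⋃₀ dxp}
            \ {⋃₀ Ds}).ncard ∧
    Ds.ncard ≤
      {p : Set (Set L) × Set (Set L) | d.IsCanonicalQPartition Ds p.1 p.2}.ncard := by
  have hcount : {p : Set (Set L) × Set (Set L) | d.IsCanonicalQPartition Ds p.1 p.2}.ncard =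
      (coverClosedSeeds Ds).ncard := by
    rw [DPI.canonicalQPartitions_eq_image hDs]
    exact Set.ncard_image_of_injective _ fun _ _ h => congrArg Prod.fst h
  rw [hcount, ← sUnion_image_coverClosedSeeds, injOn_sUnion_coverClosedSeeds.ncard_image]
  exact ⟨rfl, ncard_le_ncard_coverClosedSeeds (DPI.isAntichain_of_isMinDiagnosis hDs) hcard⟩

end KBDDiag
end
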